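/- The map F defined coordinatewise by f₀(x) = (x₀ + Σ_{i=1}^∞ 2^{−i}·(1/x_i)) mod 1 and f_i(x) = x_i + 1 for i ≥ 1 (with ∞ + 1 = ∞ and 1/∞ = 0) maps Y into Y and is continuous on Y. -/

import Mathlib

open Filter

noncomputable section

instance : Fact ((0:ℝ) < 1) := ⟨one_pos⟩

/-- The unit circle `𝕊 = ℝ/ℤ` (with the metric `d₀(x,y) = min{|x−y|, 1−|x−y|}`). -/
abbrev Circle1 := AddCircle (1 : ℝ)

/-- Points of the product space `Π_{i=0}^∞ X_i = 𝕊 × Π_{i≥1} (ℕ ∪ {∞})`: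
the first component is the circle coordinate `x₀`, and the second component gives
the coordinates `x_i ∈ ℕ ∪ {∞}` for `i ≥ 1`. -/
abbrev Pt := Circle1 × (ℕ+ → ℕ∞)

/-- `1/x` for `x ∈ ℕ ∪ {∞}`, with the convention `1/∞ = 0`. -/
noncomputable def einv (x : ℕ∞) : ℝ := ((x.toNat : ℕ) : ℝ)⁻¹

/-- The metric `d_i(x,y) = |1/x − 1/y|` on `ℕ ∪ {∞}` (for `i ≥ 1`). -/
noncomputable def dE (x y : ℕ∞) : ℝ := |einv x - einv y|

/-- The metric `D(x,y) = Σ_{i=0}^∞ d_i(x_i,y_i)/2^i` on the product space. -/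
noncomputable def D (x y : Pt) : ℝ :=
  dist x.1 y.1 + ∑' i : ℕ+, dE (x.2 i) (y.2 i) / 2 ^ (i : ℕ)

/-- `Y`: the set of points whose sequence of coordinates `(x_i)_{i≥1}` is a nondecreasing
sequence in `ℕ ∪ {∞}` (with `ℕ = {1,2,…}`). -/
def Y : Set Pt := {x | (∀ i, 1 ≤ x.2 i) ∧ Monotone x.2}

/-- The skew-product map `F`: `f₀(x) = (x₀ + Σ_{i≥1} 2^{−i}·(1/x_i)) mod 1` and
`f_i(x) = x_i + 1` for `i ≥ 1`, with `∞ + 1 = ∞`. -/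
noncomputable def F (x : Pt) : Pt :=
  (x.1 + (((∑' i : ℕ+, (1 / 2 ^ (i : ℕ)) * einv (x.2 i)) : ℝ) : Circle1),
   fun i => x.2 i + 1)

/-- `(x, y)` is a scrambled pair of `F`:
`liminf_{n→∞} D(Fⁿ(x), Fⁿ(y)) = 0` and `limsup_{n→∞} D(Fⁿ(x), Fⁿ(y)) > 0`. -/
def ScrambledPair (x y : Pt) : Prop :=
  liminf (fun n : ℕ => D (F^[n] x) (F^[n] y)) atTop = 0 ∧
  0 < limsup (fun n : ℕ => D (F^[n] x) (F^[n] y)) atTop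


/-! The shift `x_i ↦ x_i + 1` is continuous because addition on `ℕ∞` is. The circle coordinate is
continuous because `1/x` is continuous on `ℕ∞` (its only accumulation point is `∞`, where
`1/n → 0`) and bounded by `1`, so the series `Σ 2^{-i}/x_i` converges uniformly. -/

open scoped ENNReal

lemma einv_nonneg (x : ℕ∞) : 0 ≤ einv x := inv_nonneg.2 (Nat.cast_nonneg _)

lemma einv_le_one (x : ℕ∞) : einv x ≤ 1 := Nat.cast_inv_le_one _

/-- In `ℝ≥0∞`, `0⁻¹ = ⊤` and `⊤.toReal = 0`, matching the junk value `einv 0 = 0`. -/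
lemma einv_eq_toReal_inv (x : ℕ∞) : einv x = ((x : ℝ≥0∞)⁻¹).toReal := by
  cases x <;> simp [einv]

lemma continuous_einv : Continuous einv := by
  refine continuous_iff_continuousAt.2 fun x => ?_
  rcases eq_or_ne x ⊤ with rfl | hx
  · rw [funext einv_eq_toReal_inv]
    exact (ENNReal.continuousAt_toReal (by simp)).comp
      (continuous_inv.comp ENat.continuous_toENNReal).continuousAt
  · rw [ContinuousAt, ENat.nhds_eq_pure hx]
    exact tendsto_pure_nhds _ _

lemma continuous_tsum_mul_einv {ι : Type*} {w : ι → ℝ} (hw : Summable w) :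
    Continuous fun s : ι → ℕ∞ => ∑' i, w i * einv (s i) := by
  refine continuous_tsum (fun i => continuous_const.mul (continuous_einv.comp (continuous_apply i)))
    hw.abs fun i s => ?_
  rw [norm_mul, Real.norm_eq_abs, Real.norm_of_nonneg (einv_nonneg _)]
  exact mul_le_of_le_one_right (abs_nonneg _) (einv_le_one _)

lemma mapsTo_F_Y : Set.MapsTo F Y Y := fun _ hx =>
  ⟨fun i => (hx.1 i).trans le_self_add, fun _ _ hij => add_le_add_left (hx.2 hij) 1⟩

lemma continuous_F : Continuous F := by
  have hw : Summable fun i : ℕ+ => (1 / 2 ^ (i : ℕ) : ℝ) :=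
    (summable_geometric_two.comp_injective PNat.coe_injective).congr fun _ => one_div_pow _ _
  have hS := (continuous_tsum_mul_einv hw).comp (continuous_snd (X := Circle1))
  exact (continuous_fst.add ((AddCircle.continuous_mk' 1).comp hS)).prodMk
    (continuous_pi fun i => ((continuous_apply i).comp continuous_snd).add continuous_const)

/-- The map `F` maps `Y` into `Y` and is continuous on `Y`. -/
theorem F_mapsTo_continuousOn : Set.MapsTo F Y Y ∧ ContinuousOn F Y :=
  ⟨mapsTo_F_Y, continuous_F.continuousOn⟩
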